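/- Let F be a field, (V_n)_{n∈ℤ} vector spaces over F, and f_n : V_n → V_{n−1} linear maps. Suppose there is an integer N such that f_n is surjective for all n > N and injective for all n < N. Let 𝔸 be the inverse limit (coherent sequences) and 𝕂 ⊆ 𝔸 the subspace of sequences vanishing for all sufficiently small indices. Then the quotient 𝔸/𝕂 is isomorphic as an F-vector space to the image of the composite f_N ∘ f_{N+1} : V_{N+1} → V_{N−1}. -/

import Mathlib

/-!
Evaluation at `N - 1` is a linear map `𝔸 → V (N - 1)`. Since `f n` is injective below `N`, a
coherent sequence vanishing at `N - 1` vanishes wherever it vanishes far enough to the left,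
so the kernel is `𝕂`. Every value at `N - 1` factors through `f N ∘ f (N + 1)`; conversely
every `w ∈ V (N + 1)` extends to a coherent sequence, downwards by applying the maps and
upwards by choosing preimages under the surjective `f n`. So the range is the image of the
composite.
-/

/-- The canonical linear map `V a →ₗ[F] V b` induced by an equality `a = b`. -/
def castLinearMap (F : Type*) [Field F] {ι : Type*} (V : ι → Type*)
    [∀ i, AddCommGroup (V i)] [∀ i, Module F (V i)] {a b : ι} (h : a = b) :
    V a →ₗ[F] V b := by subst h; exact LinearMap.id

theorem castLinearMap_apply_apply {F : Type*} [Field F] {ι : Type*} {V : ι → Type*}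
    [∀ i, AddCommGroup (V i)] [∀ i, Module F (V i)] (x : ∀ i, V i) {a b : ι} (h : a = b) :
    castLinearMap F V h (x a) = x b := by
  subst h; rfl

section Coherent

variable {V : ℤ → Type*}

/-- `x` lies in the inverse limit `𝔸` of the system `f n : V n → V (n - 1)`. -/
def IsCoherent (f : ∀ n, V n → V (n - 1)) (x : ∀ n, V n) : Prop :=
  ∀ n, x (n - 1) = f n (x n)

theorem exists_isCoherent_apply_eq {f : ∀ n, V n → V (n - 1)} {m : ℤ}
    (hf : ∀ n > m, (f n).Surjective) (w : V m) : ∃ x, IsCoherent f x ∧ x m = w := by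
  choose lift hlift using hf
  let x : ∀ n, V n := fun n => n.inductionOn' m w
    (fun k hk v => lift (k + 1) (by omega) (cast (by rw [Int.add_sub_cancel]) v))
    (fun k _ v => f k v)
  refine ⟨x, fun n => ?_, Int.inductionOn'_self⟩
  rcases le_or_gt n m with hnm | hmn
  · exact Int.inductionOn'_sub_one hnm
  · obtain ⟨k, hk, rfl⟩ : ∃ k, m ≤ k ∧ n = k + 1 := ⟨n - 1, by omega, by omega⟩
    have hx : x (k + 1) = lift (k + 1) _ (cast _ (x k)) := Int.inductionOn'_add_one hk
    rw [hx, hlift, eq_comm, cast_eq_iff_heq]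
    exact congr_arg_heq x (by omega)

variable [∀ n, Zero (V n)] {f : ∀ n, V n → V (n - 1)} {x : ∀ n, V n}

theorem IsCoherent.apply_eq_zero_of_le (hx : IsCoherent f x) (hf : ∀ n, f n 0 = 0) {m : ℤ}
    (hm : x m = 0) {n : ℤ} (hnm : n ≤ m) : x n = 0 := by
  induction n, hnm using Int.leInductionDown with
  | base => exact hm
  | pred n _ ih => rw [hx n, ih, hf]

theorem IsCoherent.apply_eq_zero_of_forall_le (hx : IsCoherent f x) (hf : ∀ n, f n 0 = 0)
    {m : ℤ} (hinj : ∀ n ≤ m, (f n).Injective) {M : ℤ} (hM : ∀ n ≤ M, x n = 0) : x m = 0 := by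
  rcases le_or_gt m M with hmM | hMm
  · exact hM m hmM
  suffices ∀ n, M ≤ n → n ≤ m → x n = 0 from this m hMm.le le_rfl
  intro n hMn
  induction n, hMn using Int.leInduction with
  | base => exact fun _ => hM M le_rfl
  | succ n _ ih =>
    intro hnm
    have hprev : x (n + 1 - 1) = 0 := by rw [Int.add_sub_cancel]; exact ih (by omega)
    exact hinj (n + 1) hnm (by rw [← hx, hprev, hf])

end Coherent

theorem IsCoherent.apply_sub_one_eq_comp {F : Type*} [Field F] {V : ℤ → Type*}
    [∀ n, AddCommGroup (V n)] [∀ n, Module F (V n)] {f : (n : ℤ) → V n →ₗ[F] V (n - 1)}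
    {x : ∀ n, V n} (hx : IsCoherent (fun n => f n) x) (m : ℤ) :
    x (m - 1) = ((f m).comp ((castLinearMap F V (show m + 1 - 1 = m by ring)).comp (f (m + 1))))
      (x (m + 1)) := by
  have hx' : x (m + 1 - 1) = f (m + 1) (x (m + 1)) := hx (m + 1)
  rw [LinearMap.comp_apply, LinearMap.comp_apply, ← hx', castLinearMap_apply_apply, hx m]

/-- If `f n` is surjective for `n > N` and injective for `n < N`, then the
inverse limit modulo eventually-zero sequences is isomorphic to the image of
the composite `f N ∘ f (N + 1) : V (N + 1) → V (N - 1)`. -/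
theorem stmt5 (F : Type*) [Field F] (V : ℤ → Type*)
    [∀ n, AddCommGroup (V n)] [∀ n, Module F (V n)]
    (f : (n : ℤ) → V n →ₗ[F] V (n - 1)) (N : ℤ)
    (hsurj : ∀ n > N, Function.Surjective (f n))
    (hinj : ∀ n < N, Function.Injective (f n))
    (A : Submodule F (∀ n, V n))
    (hA : ∀ x, x ∈ A ↔ ∀ n, x (n - 1) = f n (x n))
    (K : Submodule F A)
    (hK : ∀ x : A, x ∈ K ↔ ∃ M : ℤ, ∀ n ≤ M, (x : ∀ n, V n) n = 0) :
    Nonempty ((A ⧸ K) ≃ₗ[F]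
      LinearMap.range ((f N).comp
        ((castLinearMap F V (show N + 1 - 1 = N by ring)).comp (f (N + 1))))) := by
  let ev : A →ₗ[F] V (N - 1) := (LinearMap.proj (N - 1)).comp A.subtype
  have hcoh (x : A) : IsCoherent (fun n => f n) x := (hA x).1 x.2
  have hker : LinearMap.ker ev = K := by
    ext x
    rw [LinearMap.mem_ker, hK]
    constructor
    · exact fun hx => ⟨N - 1, fun n => (hcoh x).apply_eq_zero_of_le (fun n => map_zero _) hx⟩
    · exact fun ⟨M, hM⟩ => (hcoh x).apply_eq_zero_of_forall_le (fun n => map_zero _)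
        (fun n hn => hinj n (by omega)) hM
  have hrange : LinearMap.range ev = LinearMap.range ((f N).comp
      ((castLinearMap F V (show N + 1 - 1 = N by ring)).comp (f (N + 1)))) := by
    apply le_antisymm
    · rintro _ ⟨x, rfl⟩
      exact ⟨x.1 (N + 1), ((hcoh x).apply_sub_one_eq_comp N).symm⟩
    · rintro _ ⟨w, rfl⟩
      obtain ⟨x, hx, hxw⟩ := exists_isCoherent_apply_eq (fun n hn => hsurj n (by omega)) w
      exact ⟨⟨x, (hA x).2 hx⟩, by rw [← hxw]; exact hx.apply_sub_one_eq_comp N⟩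
  exact ⟨(Submodule.quotEquivOfEq K _ hker.symm).trans
    (ev.quotKerEquivRange.trans (LinearEquiv.ofEq _ _ hrange))⟩
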